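/- (Convergence of synchronous PIPS) Define a sequence of H-length policies by choosing π_1 arbitrarily and, while I^{π_n,H} ≠ ∅, setting π_{n+1} = π_ps(β^{π_n,H}). Then there exists a finite N such that I^{π_N,H} = ∅, and π_N is an optimal H-length policy, i.e., V^{π_N}_H = V*_H. -/

import Mathlib

open Finset

/-- A finite MDP with finite state set `X`, finite admissible action sets, reward `R`,
transition probabilities `P`, and discount factor `disc ∈ (0,1)`. -/
structure MDP (X A : Type) [Fintype X] [Fintype A] where
  Adm : X → Finset A
  adm_nonempty : ∀ x, (Adm x).Nonempty
  R : X → A → ℝ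
  P : A → X → X → ℝ
  P_nonneg : ∀ a x y, 0 ≤ P a x y
  P_sum : ∀ a x, ∑ y, P a x y = 1
  disc : ℝ
  disc_pos : 0 < disc
  disc_lt_one : disc < 1

variable {X A : Type} [Fintype X] [Fintype A]

/-- `h`-horizon value of the `H`-length policy `π` (entries `0`-indexed: the entry applied
at value-level `h ≥ 1` is the one at position `H - h`, i.e. 1-indexed position `H - h + 1`). -/
noncomputable def MDP.val (M : MDP X A) {H : ℕ} (π : Fin H → X → A) : ℕ → X → ℝ
  | 0, _ => 0
  | h + 1, x =>
      if hlt : H - (h + 1) < H then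
        M.R x (π ⟨H - (h + 1), hlt⟩ x) +
          M.disc * ∑ y, M.P (π ⟨H - (h + 1), hlt⟩ x) x y * MDP.val M π h y
      else 0

/-- The set `Π(X)^H` of admissible `H`-length policies. -/
def MDP.Pol (M : MDP X A) (H : ℕ) : Type :=
  { π : Fin H → X → A // ∀ m x, π m x ∈ M.Adm x }

instance (M : MDP X A) (H : ℕ) : Finite (M.Pol H) := Subtype.finite

noncomputable instance (M : MDP X A) (H : ℕ) : Fintype (M.Pol H) :=
  Fintype.ofFinite _

instance (M : MDP X A) (H : ℕ) : Nonempty (M.Pol H) :=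
  ⟨⟨fun _ x => (M.adm_nonempty x).choose, fun _ x => (M.adm_nonempty x).choose_spec⟩⟩

/-- Optimal `H`-horizon value function `V*_H`. -/
noncomputable def MDP.Vopt (M : MDP X A) (H : ℕ) (x : X) : ℝ :=
  Finset.univ.sup' Finset.univ_nonempty fun π : M.Pol H => M.val π.1 H x

/-- The value-iteration operator `T`. -/
noncomputable def MDP.T (M : MDP X A) (u : X → ℝ) (x : X) : ℝ :=
  (M.Adm x).sup' (M.adm_nonempty x) fun a => M.R x a + M.disc * ∑ y, M.P a x y * u y

/-- Switchable action set `S^π_h(x)`. -/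
def MDP.Sw (M : MDP X A) {H : ℕ} (π : Fin H → X → A) (h : ℕ) (x : X) : Set A :=
  { a | a ∈ M.Adm x ∧
      M.val π h x < M.R x a + M.disc * ∑ y, M.P a x y * M.val π (h - 1) y }

/-- Improvable-state set `I^{π,H}` of pairs `(h, x)` with `1 ≤ h ≤ H` and `S^π_h(x) ≠ ∅`. -/
def MDP.Imp (M : MDP X A) {H : ℕ} (π : Fin H → X → A) : Set (ℕ × X) :=
  { p | 1 ≤ p.1 ∧ p.1 ≤ H ∧ (M.Sw π p.1 p.2).Nonempty }

/-- `φ >_H ψ` : `φ` strictly improves `ψ` over horizon `H`. -/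
def MDP.StrictImp (M : MDP X A) {H : ℕ} (φ ψ : Fin H → X → A) : Prop :=
  (∀ x, M.val ψ H x ≤ M.val φ H x) ∧ ∃ s, M.val ψ H s < M.val φ H s

/-- `β^{π,H}` : all policies obtained from `π` by switching, on a nonempty subset
`I ⊆ I^{π,H}`, the prescribed action to a switchable one, keeping all other entries.
(The entry at 0-indexed position `m` is the one applied at value-level `H - m`.) -/
def MDP.beta (M : MDP X A) {H : ℕ} (π : Fin H → X → A) : Set (Fin H → X → A) :=
  { π' | ∃ I : Set (ℕ × X), I.Nonempty ∧ I ⊆ M.Imp π ∧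
      (∀ (m : Fin H) (x : X), (H - m.1, x) ∈ I → π' m x ∈ M.Sw π (H - m.1) x) ∧
      (∀ (m : Fin H) (x : X), (H - m.1, x) ∉ I → π' m x = π m x) }

/-- `β^{π,H}_x` : all policies obtained from `π` by switching actions only at state `x0`,
at a nonempty set `I` of improvable levels, keeping all other entries. -/
def MDP.betaAt (M : MDP X A) {H : ℕ} (π : Fin H → X → A) (x0 : X) : Set (Fin H → X → A) :=
  { π' | ∃ I : Set ℕ, I.Nonempty ∧
      (∀ h ∈ I, 1 ≤ h ∧ h ≤ H ∧ (M.Sw π h x0).Nonempty) ∧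
      (∀ m : Fin H, H - m.1 ∈ I → π' m x0 ∈ M.Sw π (H - m.1) x0) ∧
      (∀ (m : Fin H) (x : X), x ≠ x0 ∨ H - m.1 ∉ I → π' m x = π m x) }

/-!
Write `π_ps(Δ)` for the policy-switching policy of a set `Δ` of policies. Every switch in
`β^{π,H}` weakly improves `π` at every level, a single switch at an improvable pair `(h, x)`
improves it strictly there, and `π_ps(Δ)` dominates every member of `Δ` at every level. So as long
as `I^{π_n,H} ≠ ∅`, the total value `∑_{h ≤ H} ∑_x V^{π_n}_h(x)` strictly increases; as there are
finitely many policies, some `I^{π_N,H}` is empty. A policy with no improvable pair satisfies the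
Bellman optimality inequalities at every level, hence dominates every admissible policy.
-/

theorem Finite.exists_not_of_map_lt_succ {α β : Type*} [Finite α] [Preorder β] (f : ℕ → α)
    (g : α → β) (P : α → Prop) (hf : ∀ n, P (f n) → g (f n) < g (f (n + 1))) : ∃ N, ¬P (f N) := by
  by_contra! hall
  have hmono : StrictMono (g ∘ f) := strictMono_nat_of_lt_succ fun n => hf n (hall n)
  exact not_injective_infinite_finite f hmono.injective.of_comp

namespace MDP

variable (M : MDP X A) {H : ℕ}

noncomputable def backup (u : X → ℝ) (a : A) (x : X) : ℝ :=
  M.R x a + M.disc * ∑ y, M.P a x y * u y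

/-- The position of the entry that `val` applies at value level `h + 1`. -/
def posOfLevel {h : ℕ} (hh : h < H) : Fin H := ⟨H - (h + 1), by omega⟩

lemma sub_posOfLevel {h : ℕ} (hh : h < H) : H - (posOfLevel hh).1 = h + 1 := by
  simp only [posOfLevel]; omega

variable {M}

lemma backup_mono {u v : X → ℝ} (huv : ∀ y, u y ≤ v y) (a : A) (x : X) :
    M.backup u a x ≤ M.backup v a x := by
  unfold backup
  gcongr with y
  · exact M.disc_pos.le
  · exact M.P_nonneg a x y
  · exact huv y

@[simp]
lemma val_zero (π : Fin H → X → A) (x : X) : M.val π 0 x = 0 := rfl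

lemma val_succ (π : Fin H → X → A) {h : ℕ} (hh : h < H) (x : X) :
    M.val π (h + 1) x = M.backup (M.val π h) (π (posOfLevel hh) x) x := by
  rw [val, dif_pos (by omega)]
  rfl

theorem val_le_val_of_le_backup {S : Set (Fin H → X → A)} {τ : Fin H → X → A}
    (hS : ∀ h (hh : h < H), (∀ σ ∈ S, ∀ y, M.val σ h y ≤ M.val τ h y) →
      ∀ σ ∈ S, ∀ x, M.val σ (h + 1) x ≤ M.backup (M.val τ h) (τ (posOfLevel hh) x) x) :
    ∀ σ ∈ S, ∀ h ≤ H, ∀ x, M.val σ h x ≤ M.val τ h x := by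
  suffices key : ∀ h ≤ H, ∀ σ ∈ S, ∀ x, M.val σ h x ≤ M.val τ h x from
    fun σ hσ h hh => key h hh σ hσ
  intro h
  induction h with
  | zero => simp
  | succ h ih =>
    intro hh σ hσ x
    rw [val_succ τ (by omega)]
    exact hS h (by omega) (ih (by omega)) σ hσ x

lemma val_le_val_of_mem_beta {π ψ : Fin H → X → A} (hψ : ψ ∈ M.beta π) :
    ∀ h ≤ H, ∀ x, M.val π h x ≤ M.val ψ h x := by
  obtain ⟨I, -, -, hsw, hkeep⟩ := hψ
  refine val_le_val_of_le_backup (S := {π}) ?_ π rfl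
  rintro h hh ih σ rfl x
  have hle : M.val σ (h + 1) x ≤ M.backup (M.val σ h) (ψ (posOfLevel hh) x) x := by
    by_cases hI : (h + 1, x) ∈ I
    · have hsw' := (hsw (posOfLevel hh) x (by rwa [sub_posOfLevel])).2
      rw [sub_posOfLevel] at hsw'
      exact hsw'.le
    · rw [hkeep (posOfLevel hh) x (by rwa [sub_posOfLevel]), val_succ σ hh]
  exact hle.trans (backup_mono (ih σ rfl) _ _)

lemma exists_mem_beta_val_lt {π : Fin H → X → A} {h : ℕ} {x₀ : X} (hI : (h, x₀) ∈ M.Imp π) :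
    ∃ ψ ∈ M.beta π, M.val π h x₀ < M.val ψ h x₀ := by
  classical
  obtain ⟨h1, hH, a, ha⟩ := hI
  obtain ⟨h, rfl⟩ : ∃ k, h = k + 1 := ⟨h - 1, by omega⟩
  let ψ : Fin H → X → A := fun m x => if H - m.1 = h + 1 ∧ x = x₀ then a else π m x
  have hψ : ψ ∈ M.beta π := by
    refine ⟨{(h + 1, x₀)}, Set.singleton_nonempty _, ?_, ?_, ?_⟩
    · rintro _ rfl
      exact ⟨h1, hH, a, ha⟩
    · rintro m x hmx
      obtain ⟨hm, rfl⟩ := Prod.mk.inj hmx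
      simpa [ψ, hm] using ha
    · rintro m x hmx
      have hne : ¬(H - m.1 = h + 1 ∧ x = x₀) := fun hc => hmx (by rw [hc.1, hc.2]; rfl)
      simp only [ψ, if_neg hne]
  have hψa : ψ (posOfLevel (Nat.lt_of_succ_le hH)) x₀ = a := by
    simp [ψ, sub_posOfLevel]
  refine ⟨ψ, hψ, ?_⟩
  calc M.val π (h + 1) x₀ < M.backup (M.val π h) a x₀ := ha.2
    _ ≤ M.backup (M.val ψ h) a x₀ := backup_mono (val_le_val_of_mem_beta hψ h (by omega)) _ _
    _ = M.val ψ (h + 1) x₀ := by rw [val_succ ψ hH, hψa]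

variable (M) in
/-- `σ` is the policy-switching policy `π_ps(Δ)`. -/
def IsPolicySwitching (Δ : Set (Fin H → X → A)) (σ : Fin H → X → A) : Prop :=
  ∀ (m : Fin H) (x : X), ∃ φ ∈ Δ,
    σ m x = φ m x ∧ ∀ ψ ∈ Δ, M.val ψ (H - m.1) x ≤ M.val φ (H - m.1) x

lemma IsPolicySwitching.val_le {Δ : Set (Fin H → X → A)} {σ : Fin H → X → A}
    (hσ : M.IsPolicySwitching Δ σ) : ∀ ψ ∈ Δ, ∀ h ≤ H, ∀ x, M.val ψ h x ≤ M.val σ h x := by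
  refine val_le_val_of_le_backup fun h hh ih ψ hψ x => ?_
  obtain ⟨φ, hφ, hσφ, hmax⟩ := hσ (posOfLevel hh) x
  rw [sub_posOfLevel] at hmax
  calc M.val ψ (h + 1) x ≤ M.val φ (h + 1) x := hmax ψ hψ
    _ = M.backup (M.val φ h) (φ (posOfLevel hh) x) x := val_succ φ hh x
    _ ≤ M.backup (M.val σ h) (σ (posOfLevel hh) x) x := by
        rw [hσφ]; exact backup_mono (ih φ hφ) _ _

variable (M) in
noncomputable def totalVal (π : Fin H → X → A) : ℝ :=
  ∑ h ∈ range (H + 1), ∑ x, M.val π h x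

lemma totalVal_lt {σ τ : Fin H → X → A} (hle : ∀ h ≤ H, ∀ x, M.val σ h x ≤ M.val τ h x)
    {h₀ : ℕ} (hh₀ : h₀ ≤ H) {x₀ : X} (hlt : M.val σ h₀ x₀ < M.val τ h₀ x₀) :
    M.totalVal σ < M.totalVal τ := by
  refine sum_lt_sum
    (fun h hh => sum_le_sum fun x _ => hle h (Nat.lt_succ_iff.1 (mem_range.1 hh)) x)
    ⟨h₀, mem_range.2 (by omega), ?_⟩
  exact sum_lt_sum (fun x _ => hle h₀ hh₀ x) ⟨x₀, mem_univ _, hlt⟩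

lemma totalVal_lt_of_isPolicySwitching_beta {π σ : Fin H → X → A} (hI : (M.Imp π).Nonempty)
    (hσ : M.IsPolicySwitching (M.beta π) σ) : M.totalVal π < M.totalVal σ := by
  obtain ⟨⟨h, x⟩, hhx⟩ := hI
  obtain ⟨ψ, hψ, hlt⟩ := exists_mem_beta_val_lt hhx
  have hdom := hσ.val_le ψ hψ
  exact totalVal_lt (fun h hh x => (val_le_val_of_mem_beta hψ h hh x).trans (hdom h hh x))
    hhx.2.1 (hlt.trans_le (hdom h hhx.2.1 x))

lemma val_le_of_imp_eq_empty {π : Fin H → X → A} (hπ : M.Imp π = ∅) (σ : M.Pol H) :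
    ∀ h ≤ H, ∀ x, M.val σ.1 h x ≤ M.val π h x := by
  refine val_le_val_of_le_backup (S := {σ.1}) (fun h hh ih ψ hψ x => ?_) σ.1 rfl
  rw [Set.mem_singleton_iff] at hψ
  subst hψ
  have hopt : M.backup (M.val π h) (σ.1 (posOfLevel hh) x) x ≤ M.val π (h + 1) x := by
    by_contra! hlt
    have hmem : (h + 1, x) ∈ M.Imp π := ⟨by omega, hh, _, σ.2 _ x, hlt⟩
    simp [hπ] at hmem
  rw [val_succ σ.1 hh, ← val_succ π hh]
  exact (backup_mono (ih σ.1 rfl) _ _).trans hopt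

lemma val_eq_Vopt_of_imp_eq_empty {π : M.Pol H} (hπ : M.Imp π.1 = ∅) (x : X) :
    M.val π.1 H x = M.Vopt H x :=
  le_antisymm (le_sup' (fun σ : M.Pol H => M.val σ.1 H x) (mem_univ π))
    (sup'_le _ _ fun σ _ => val_le_of_imp_eq_empty hπ σ H le_rfl x)

end MDP

theorem synchronous_PIPS_converges_general (M : MDP X A) {H : ℕ} (π : ℕ → M.Pol H)
    (hstep : ∀ n, (M.Imp (π n).1).Nonempty →
      ∀ (m : Fin H) (x : X), ∃ φ ∈ M.beta (π n).1,
        (π (n + 1)).1 m x = φ m x ∧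
        ∀ ψ ∈ M.beta (π n).1, M.val ψ (H - m.1) x ≤ M.val φ (H - m.1) x) :
    ∃ N, M.Imp (π N).1 = ∅ ∧ ∀ x, M.val (π N).1 H x = M.Vopt H x := by
  obtain ⟨N, hN⟩ := Finite.exists_not_of_map_lt_succ π (fun p => M.totalVal p.1)
    (fun p => (M.Imp p.1).Nonempty)
    (fun n hn => MDP.totalVal_lt_of_isPolicySwitching_beta hn (hstep n hn))
  rw [Set.not_nonempty_iff_eq_empty] at hN
  exact ⟨N, hN, MDP.val_eq_Vopt_of_imp_eq_empty hN⟩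

/-- convergence of synchronous PIPS: iterating `π_{n+1} = π_ps(β^{π_n,H})`
while `I^{π_n,H} ≠ ∅` reaches, in finitely many steps, a policy with empty improvable set,
which is optimal for `M_H`. -/
theorem synchronous_PIPS_converges (M : MDP X A) {H : ℕ} (π : ℕ → M.Pol H)
    (hstep : ∀ n, (M.Imp (π n).1).Nonempty →
      ∀ (m : Fin H) (x : X), ∃ φ ∈ M.beta (π n).1,
        (π (n + 1)).1 m x = φ m x ∧
        ∀ ψ ∈ M.beta (π n).1, M.val ψ (H - m.1) x ≤ M.val φ (H - m.1) x)
    (hstop : ∀ n, ¬(M.Imp (π n).1).Nonempty → π (n + 1) = π n) :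
    ∃ N, M.Imp (π N).1 = ∅ ∧ ∀ x, M.val (π N).1 H x = M.Vopt H x :=
  synchronous_PIPS_converges_general M π hstep
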